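/- Let B and B' be skew-symmetric n×n integer matrices that are mutation equivalent, and let A and A' be quasi-Cartan companions of B and B' respectively. Then det(A) ≡ det(A') mod 4. -/

import Mathlib

open Matrix

/-- Matrix mutation of a skew-symmetric integer matrix in direction k. -/
def mutate {n : ℕ} (B : Matrix (Fin n) (Fin n) ℤ) (k : Fin n) :
    Matrix (Fin n) (Fin n) ℤ :=
  Matrix.of fun i j =>
    if i = k ∨ j = k then -B i j
    else B i j + max (B i k) 0 * max (B k j) 0 - max (-(B i k)) 0 * max (-(B k j)) 0

/-- Mutation equivalence: the equivalence relation generated by all mutations. -/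
def MutationEquiv {n : ℕ} (B B' : Matrix (Fin n) (Fin n) ℤ) : Prop :=
  Relation.EqvGen (fun C C' => ∃ k : Fin n, C' = mutate C k) B B'

/-- A quasi-Cartan companion of a skew-symmetric matrix B: symmetric, with
diagonal entries 2, matching B in absolute value off the diagonal. -/
def IsQuasiCartanCompanion {n : ℕ} (B A : Matrix (Fin n) (Fin n) ℤ) : Prop :=
  A.IsSymm ∧ (∀ i, A i i = 2) ∧ ∀ i j, i ≠ j → |A i j| = |B i j|

/-
Modulo 4 one has `det (M + 2E) = det M + 2 tr (E adj M)`. When `M` and `E` are symmetric and `E`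
has even diagonal, the off-diagonal terms of `2 tr (E adj M)` cancel in pairs, so
`det (M + 2E) ≡ det M`. Two quasi-Cartan companions of `B` differ in exactly this way. For
mutations, `μ_k(B) = E B Eᵀ` with an integer matrix `E` satisfying `E² = 1`, and for a companion
`A` of `B` the congruent matrix `E A Eᵀ` (which has the same determinant) differs in this way from
every companion of `μ_k(B)`.
-/

theorem Relation.EqvGen.invariant {α β : Type*} {r : α → α → Prop} {P : α → Prop}
    {f : α → β} (hP : ∀ a b, r a b → (P a ↔ P b)) (hf : ∀ a b, r a b → P a → f a = f b)
    {a b : α} (h : Relation.EqvGen r a b) (ha : P a) : P b ∧ f a = f b := by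
  suffices (P a ↔ P b) ∧ (P a → f a = f b) from ⟨this.1.1 ha, this.2 ha⟩
  clear ha
  induction h with
  | rel a b hab => exact ⟨hP a b hab, hf a b hab⟩
  | refl a => exact ⟨Iff.rfl, fun _ => rfl⟩
  | symm a b _ ih => exact ⟨ih.1.symm, fun hb => (ih.2 (ih.1.2 hb)).symm⟩
  | trans a b c _ _ ihab ihbc =>
    exact ⟨ihab.1.trans ihbc.1, fun ha => (ihab.2 ha).trans (ihbc.2 (ihab.1.1 ha))⟩

theorem Int.cast_zmod_two_eq_of_abs_eq {a b : ℤ} (h : |a| = |b|) : (a : ZMod 2) = b := by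
  rcases abs_eq_abs.mp h with rfl | rfl
  · rfl
  · rw [Int.cast_neg, ZMod.neg_eq_self_mod_two]

theorem max_mul_add_mul_max_neg (a b : ℤ) :
    max a 0 * b + a * max (-b) 0 = max a 0 * max b 0 - max (-a) 0 * max (-b) 0 := by
  rcases le_total a 0 with ha | ha <;> rcases le_total b 0 with hb | hb <;>
    simp [ha, hb]

theorem two_dvd_max_mul_add_max {a b : ℤ} (h : |a| = |b|) : 2 ∣ max b 0 * (a + max b 0) := by
  rcases le_total b 0 with hb | hb
  · simp [hb]
  · rcases abs_eq_abs.mp h with rfl | rfl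
    · exact ⟨a * a, by rw [max_eq_left hb]; ring⟩
    · simp [hb]

theorem Fintype.sum_sum_eq_zero_of_add_swap {ι M : Type*} [Fintype ι] [AddCommMonoid M]
    (x : ι → ι → M) (hdiag : ∀ i, x i i = 0) (hswap : ∀ i j, x i j + x j i = 0) :
    ∑ i, ∑ j, x i j = 0 := by
  rw [← Finset.sum_product']
  refine Finset.sum_ninvolution Prod.swap (fun p => hswap p.1 p.2) ?_
    (fun _ => Finset.mem_univ _) Prod.swap_swap
  rintro ⟨i, j⟩ hx hij
  obtain rfl : i = j := congrArg Prod.snd hij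
  exact hx (hdiag i)

namespace Matrix

theorem apply_swap_of_transpose_eq_neg {ι : Type*} {B : Matrix ι ι ℤ} (hB : Bᵀ = -B)
    (i j : ι) : B j i = -B i j := by
  simpa using congrFun₂ hB i j

theorem apply_self_eq_zero_of_transpose_eq_neg {ι : Type*} {B : Matrix ι ι ℤ} (hB : Bᵀ = -B)
    (i : ι) : B i i = 0 := by
  linarith [apply_swap_of_transpose_eq_neg hB i i]

section CommRing

variable {n R : Type*} [Fintype n] [CommRing R]

theorem two_mul_trace_mul_eq_zero (h4 : (4 : R) = 0) {E S : Matrix n n R} (hE : E.IsSymm)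
    (hS : S.IsSymm) (hdiag : ∀ i, 2 * E i i = 0) : 2 * trace (E * S) = 0 := by
  simp only [trace, diag_apply, mul_apply, Finset.mul_sum]
  refine Fintype.sum_sum_eq_zero_of_add_swap _ (fun i => ?_) (fun i j => ?_)
  · rw [← mul_assoc, hdiag, zero_mul]
  · linear_combination (E i j * S j i) * h4 + 2 * S i j * hE.apply i j
      + 2 * E i j * hS.apply j i

variable [DecidableEq n]

theorem det_updateRow_eq_sum_mul_adjugate (M : Matrix n n R) (i : n) (v : n → R) :
    (M.updateRow i v).det = ∑ j, v j * M.adjugate j i := by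
  rw [det_eq_sum_mul_adjugate_row _ i]
  simp only [updateRow_self, adjugate_apply, updateRow_idem]

theorem det_add_two_smul_of_rows (h4 : (4 : R) = 0) (E : Matrix n n R) (s : Finset n)
    (M : Matrix n n R) :
    (M + (2 : R) • of fun i j => if i ∈ s then E i j else 0).det
      = M.det + 2 * ∑ i ∈ s, (M.updateRow i (E i)).det := by
  induction s using Finset.induction_on generalizing M with
  | empty =>
    have : (of fun i j => if i ∈ (∅ : Finset n) then E i j else 0) = 0 := by ext; simp
    rw [this, smul_zero, add_zero, Finset.sum_empty, mul_zero, add_zero]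
  | insert a s ha ih =>
    set F : Matrix n n R := of fun i j => if i ∈ s then E i j else 0
    have hFa : ∀ j, F a j = 0 := by simp [F, ha]
    have hsplit : M + (2 : R) • (of fun i j => if i ∈ insert a s then E i j else 0)
        = (M + (2 : R) • F).updateRow a (M a + (2 : R) • E a) := by
      ext i j
      by_cases hi : i = a
      · subst hi; simp
      · simp [F, hi]
    have hrow : (M + (2 : R) • F).updateRow a (E a) = M.updateRow a (E a) + (2 : R) • F := by
      ext i j
      by_cases hi : i = a
      · subst hi; simp [hFa]
      · simp [updateRow_ne hi]
    have hself : (M + (2 : R) • F).updateRow a (M a) = M + (2 : R) • F := by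
      ext i j
      by_cases hi : i = a
      · subst hi; simp [hFa]
      · simp [updateRow_ne hi]
    -- the new cross term is computed on `M + 2 • F`, not on `M`, but it carries a factor `2`,
    -- so by `ih` the difference is a multiple of `4`
    rw [hsplit, det_updateRow_add, det_updateRow_smul, hself, hrow, ih, ih,
      Finset.sum_insert ha]
    linear_combination (∑ i ∈ s, ((M.updateRow a (E a)).updateRow i (E i)).det) * h4

theorem det_add_two_smul (h4 : (4 : R) = 0) (M E : Matrix n n R) :
    (M + (2 : R) • E).det = M.det + 2 * trace (E * M.adjugate) := by
  have hE : (of fun i j => if i ∈ (Finset.univ : Finset n) then E i j else 0) = E := by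
    ext; simp
  conv_lhs => rw [← hE, det_add_two_smul_of_rows h4 E Finset.univ M]
  simp [det_updateRow_eq_sum_mul_adjugate, trace, mul_apply]

theorem det_add_two_smul_of_isSymm (h4 : (4 : R) = 0) {M E : Matrix n n R} (hM : M.IsSymm)
    (hE : E.IsSymm) (hdiag : ∀ i, 2 * E i i = 0) : (M + (2 : R) • E).det = M.det := by
  rw [det_add_two_smul h4, two_mul_trace_mul_eq_zero h4 hE hM.adjugate hdiag, add_zero]

end CommRing

variable {n : Type*} [Fintype n] [DecidableEq n]

theorem intCast_det_zmod_four_eq_of_isSymm {M N : Matrix n n ℤ} (hM : M.IsSymm) (hN : N.IsSymm)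
    (hmod2 : M.map (Int.castRingHom (ZMod 2)) = N.map (Int.castRingHom (ZMod 2)))
    (hdiag : ∀ i, (M i i : ZMod 4) = N i i) : (M.det : ZMod 4) = N.det := by
  have hdvd : ∀ i j, 2 ∣ N i j - M i j := fun i j =>
    (ZMod.intCast_eq_intCast_iff_dvd_sub _ _ 2).mp (congrFun₂ hmod2 i j)
  set E : Matrix n n ℤ := of fun i j => (N i j - M i j) / 2
  have hNE : ∀ i j, N i j = M i j + 2 * E i j := fun i j => by
    have := Int.mul_ediv_cancel' (hdvd i j)
    simp only [E, of_apply]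
    omega
  have hE : E.IsSymm := IsSymm.ext fun i j => by simp [E, hM.apply, hN.apply]
  have hEdiag : ∀ i, 2 * (E i i : ZMod 4) = 0 := fun i => by
    have h := congrArg (Int.cast : ℤ → ZMod 4) (hNE i i)
    push_cast at h
    rw [← hdiag i] at h
    exact left_eq_add.mp h
  have hmap : N.map (Int.castRingHom (ZMod 4))
      = M.map (Int.castRingHom (ZMod 4)) + (2 : ZMod 4) • E.map (Int.castRingHom (ZMod 4)) := by
    ext i j
    simp [hNE i j]
  simp only [← eq_intCast (Int.castRingHom (ZMod 4)), RingHom.map_det]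
  rw [RingHom.mapMatrix_apply, RingHom.mapMatrix_apply, hmap,
    det_add_two_smul_of_isSymm (by decide) (hM.map _) (hE.map _) hEdiag]

end Matrix

section QuasiCartan

variable {n : ℕ} {B A A' : Matrix (Fin n) (Fin n) ℤ}

theorem IsQuasiCartanCompanion.map_zmod_two (hB : Bᵀ = -B) (hA : IsQuasiCartanCompanion B A) :
    A.map (Int.castRingHom (ZMod 2)) = B.map (Int.castRingHom (ZMod 2)) := by
  ext i j
  by_cases hij : i = j
  · subst hij
    simp only [map_apply, Int.coe_castRingHom, hA.2.1 i,
      apply_self_eq_zero_of_transpose_eq_neg hB, Int.cast_ofNat, Int.cast_zero]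
    decide
  · exact Int.cast_zmod_two_eq_of_abs_eq (hA.2.2 i j hij)

theorem IsQuasiCartanCompanion.intCast_det_eq (hA : IsQuasiCartanCompanion B A)
    (hA' : IsQuasiCartanCompanion B A') : (A.det : ZMod 4) = A'.det := by
  refine intCast_det_zmod_four_eq_of_isSymm hA.1 hA'.1 ?_ fun i => by rw [hA.2.1, hA'.2.1]
  ext i j
  by_cases hij : i = j
  · subst hij; simp [hA.2.1, hA'.2.1]
  · exact Int.cast_zmod_two_eq_of_abs_eq ((hA.2.2 i j hij).trans (hA'.2.2 i j hij).symm)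

def canonicalCompanion (B : Matrix (Fin n) (Fin n) ℤ) : Matrix (Fin n) (Fin n) ℤ :=
  of fun i j => if i = j then 2 else |B i j|

theorem isQuasiCartanCompanion_canonicalCompanion (hB : Bᵀ = -B) :
    IsQuasiCartanCompanion B (canonicalCompanion B) := by
  refine ⟨IsSymm.ext fun i j => ?_, fun i => by simp [canonicalCompanion],
    fun i j hij => by simp [canonicalCompanion, hij]⟩
  by_cases hij : i = j
  · simp [canonicalCompanion, hij]
  · simp [canonicalCompanion, hij, Ne.symm hij, apply_swap_of_transpose_eq_neg hB i j]

end QuasiCartan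

section Mutation

variable {n : ℕ}

def mutationVector (B : Matrix (Fin n) (Fin n) ℤ) (k : Fin n) : Fin n → ℤ :=
  fun i => if i = k then -2 else max (B i k) 0

def mutationMatrix (B : Matrix (Fin n) (Fin n) ℤ) (k : Fin n) : Matrix (Fin n) (Fin n) ℤ :=
  1 + of fun i l => if l = k then mutationVector B k i else 0

variable (B : Matrix (Fin n) (Fin n) ℤ) (k : Fin n)

theorem mutationVector_self : mutationVector B k k = -2 := if_pos rfl

theorem mutationVector_of_ne {i : Fin n} (hik : i ≠ k) : mutationVector B k i = max (B i k) 0 :=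
  if_neg hik

theorem mutationMatrix_mul_apply (X : Matrix (Fin n) (Fin n) ℤ) (i j : Fin n) :
    (mutationMatrix B k * X) i j = X i j + mutationVector B k i * X k j := by
  rw [mutationMatrix, add_mul, one_mul, Matrix.add_apply]
  simp [mul_apply]

theorem mul_mutationMatrix_transpose_apply (X : Matrix (Fin n) (Fin n) ℤ) (i j : Fin n) :
    (X * (mutationMatrix B k)ᵀ) i j = X i j + X i k * mutationVector B k j := by
  rw [mutationMatrix, transpose_add, transpose_one, mul_add, mul_one, Matrix.add_apply]
  simp [mul_apply]

theorem mutationMatrix_conj_apply (X : Matrix (Fin n) (Fin n) ℤ) (i j : Fin n) :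
    (mutationMatrix B k * X * (mutationMatrix B k)ᵀ) i j
      = X i j + mutationVector B k i * X k j + X i k * mutationVector B k j
        + mutationVector B k i * mutationVector B k j * X k k := by
  rw [mul_mutationMatrix_transpose_apply, mutationMatrix_mul_apply, mutationMatrix_mul_apply]
  ring

theorem mutationMatrix_mul_self : mutationMatrix B k * mutationMatrix B k = 1 := by
  ext i j
  rw [mutationMatrix_mul_apply]
  by_cases hjk : j = k
  · subst hjk
    by_cases hij : i = j <;> simp [mutationMatrix, mutationVector, one_apply, hij]
  · simp [mutationMatrix, one_apply, hjk, Ne.symm hjk]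

theorem det_mutationMatrix_conj (X : Matrix (Fin n) (Fin n) ℤ) :
    (mutationMatrix B k * X * (mutationMatrix B k)ᵀ).det = X.det := by
  have h := congrArg det (mutationMatrix_mul_self B k)
  rw [det_mul, det_one] at h
  rw [det_mul, det_mul, det_transpose]
  linear_combination X.det * h

variable {B} in
theorem mutate_eq_mutationMatrix_conj (hB : Bᵀ = -B) :
    mutate B k = mutationMatrix B k * B * (mutationMatrix B k)ᵀ := by
  have hkk := apply_self_eq_zero_of_transpose_eq_neg hB k
  ext i j
  rw [mutationMatrix_conj_apply, hkk]
  by_cases hik : i = k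
  · subst hik
    simp only [mutate, of_apply, true_or, if_true, mutationVector_self, hkk]
    ring
  by_cases hjk : j = k
  · subst hjk
    simp only [mutate, of_apply, or_true, if_true, mutationVector_self, hkk]
    ring
  simp only [mutate, of_apply, if_neg (not_or.2 ⟨hik, hjk⟩), mutationVector_of_ne B k hik,
    mutationVector_of_ne B k hjk, apply_swap_of_transpose_eq_neg hB k j]
  linarith [max_mul_add_mul_max_neg (B i k) (B k j)]

variable {B} in
theorem mutate_transpose (hB : Bᵀ = -B) : (mutate B k)ᵀ = -mutate B k := by
  rw [mutate_eq_mutationMatrix_conj k hB, transpose_mul, transpose_mul, transpose_transpose, hB,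
    Matrix.neg_mul, Matrix.mul_neg, Matrix.mul_assoc]

theorem mutate_mutate : mutate (mutate B k) k = B := by
  ext i j
  by_cases hik : i = k
  · simp [mutate, hik]
  by_cases hjk : j = k
  · simp [mutate, hjk]
  simp [mutate, hik, hjk]

theorem mutate_transpose_eq_neg_iff : (mutate B k)ᵀ = -mutate B k ↔ Bᵀ = -B :=
  ⟨fun h => mutate_mutate B k ▸ mutate_transpose k h, mutate_transpose k⟩

variable {B} in
theorem intCast_mutationMatrix_conj_apply_self {A : Matrix (Fin n) (Fin n) ℤ}
    (hA : IsQuasiCartanCompanion B A) (i : Fin n) :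
    ((mutationMatrix B k * A * (mutationMatrix B k)ᵀ) i i : ZMod 4) = 2 := by
  set w := mutationVector B k i
  have hAii :
      (mutationMatrix B k * A * (mutationMatrix B k)ᵀ) i i = 2 + 2 * (w * (A i k + w)) := by
    rw [mutationMatrix_conj_apply, hA.2.1, hA.2.1, hA.1.apply k i]
    ring
  have heven : 2 ∣ w * (A i k + w) := by
    by_cases hik : i = k
    · subst hik; simp [w, mutationVector_self, hA.2.1]
    · simpa [w, mutationVector_of_ne B k hik] using two_dvd_max_mul_add_max (hA.2.2 i k hik)
  obtain ⟨c, hc⟩ := heven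
  have h4 : (4 : ZMod 4) = 0 := by decide
  rw [hAii, hc]
  push_cast
  linear_combination (c : ZMod 4) * h4

variable {B} in
theorem IsQuasiCartanCompanion.intCast_det_mutate_eq (hB : Bᵀ = -B)
    {A A' : Matrix (Fin n) (Fin n) ℤ} (hA : IsQuasiCartanCompanion B A)
    (hA' : IsQuasiCartanCompanion (mutate B k) A') : (A.det : ZMod 4) = A'.det := by
  set E := mutationMatrix B k
  have hsymm : (E * A * Eᵀ).IsSymm := by
    rw [IsSymm, transpose_mul, transpose_mul, transpose_transpose, hA.1.eq, Matrix.mul_assoc]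
  have hmod2 :
      (E * A * Eᵀ).map (Int.castRingHom (ZMod 2)) = A'.map (Int.castRingHom (ZMod 2)) := by
    rw [hA'.map_zmod_two (mutate_transpose k hB), mutate_eq_mutationMatrix_conj k hB,
      Matrix.map_mul, Matrix.map_mul, Matrix.map_mul, Matrix.map_mul, hA.map_zmod_two hB]
  rw [← det_mutationMatrix_conj B k A]
  exact intCast_det_zmod_four_eq_of_isSymm hsymm hA'.1 hmod2 fun i => by
    rw [intCast_mutationMatrix_conj_apply_self k hA, hA'.2.1]; rfl

end Mutation

theorem MutationEquiv.intCast_det_canonicalCompanion_eq {n : ℕ}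
    {B B' : Matrix (Fin n) (Fin n) ℤ} (hmut : MutationEquiv B B') (hB : Bᵀ = -B) :
    B'ᵀ = -B' ∧ ((canonicalCompanion B).det : ZMod 4) = (canonicalCompanion B').det := by
  refine Relation.EqvGen.invariant (P := fun C => Cᵀ = -C)
    (f := fun C => ((canonicalCompanion C).det : ZMod 4)) ?_ ?_ hmut hB
  · rintro C _ ⟨k, rfl⟩
    exact (mutate_transpose_eq_neg_iff C k).symm
  · rintro C _ ⟨k, rfl⟩ hC
    exact (isQuasiCartanCompanion_canonicalCompanion hC).intCast_det_mutate_eq k hC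
      (isQuasiCartanCompanion_canonicalCompanion (mutate_transpose k hC))

theorem stmt_18_general (n : ℕ) (B B' A A' : Matrix (Fin n) (Fin n) ℤ)
    (hB : Bᵀ = -B)
    (hmut : MutationEquiv B B')
    (hA : IsQuasiCartanCompanion B A)
    (hA' : IsQuasiCartanCompanion B' A') :
    ((A.det : ℤ) : ZMod 4) = ((A'.det : ℤ) : ZMod 4) := by
  obtain ⟨hB', hdet⟩ := hmut.intCast_det_canonicalCompanion_eq hB
  calc (A.det : ZMod 4)
      = (canonicalCompanion B).det :=
        hA.intCast_det_eq (isQuasiCartanCompanion_canonicalCompanion hB)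
    _ = (canonicalCompanion B').det := hdet
    _ = A'.det := (hA'.intCast_det_eq (isQuasiCartanCompanion_canonicalCompanion hB')).symm

/-- Theorem 1.7 (last claim): quasi-Cartan companions of mutation equivalent
skew-symmetric matrices have congruent determinants modulo 4. -/
theorem stmt_18 (n : ℕ) (B B' A A' : Matrix (Fin n) (Fin n) ℤ)
    (hB : Bᵀ = -B) (hB' : B'ᵀ = -B')
    (hmut : MutationEquiv B B')
    (hA : IsQuasiCartanCompanion B A)
    (hA' : IsQuasiCartanCompanion B' A') :
    ((A.det : ℤ) : ZMod 4) = ((A'.det : ℤ) : ZMod 4) :=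
  stmt_18_general n B B' A A' hB hmut hA hA'
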